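/- Let X₂ be a finite set, and for each x₂ ∈ X₂ let W₀(·|x₂), W₁(·|x₂) be pmfs on a finite set Z with W₁(·|x₂) ≪ W₀(·|x₂). Let P be a pmf on X₂ and α ∈ (0,1]. Define the per-symbol mixture W_α(·|x₂) = α W₁(·|x₂) + (1−α) W₀(·|x₂). Then Σ_{x₂} P(x₂) D(W_α(·|x₂) ‖ W₀(·|x₂)) ≥ (1−√α)·(α²/2)·Σ_{x₂} P(x₂) χ₂(W₁(·|x₂) ‖ W₀(·|x₂)) for all sufficiently small α, uniformly in P. -/

import Mathlib

open Filter Real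

noncomputable def KL {Z : Type*} [Fintype Z] (P Q : Z → ℝ) : ℝ :=
  ∑ z, P z * Real.log (P z / Q z)

noncomputable def chi2 {Z : Type*} [Fintype Z] (P Q : Z → ℝ) : ℝ :=
  ∑ z, (P z - Q z)^2 / Q z

def IsPMF {Z : Type*} [Fintype Z] (P : Z → ℝ) : Prop :=
  (∀ z, 0 ≤ P z) ∧ ∑ z, P z = 1

/-- absolute continuity `P ≪ Q` for pmfs on a finite alphabet -/
def AC {Z : Type*} [Fintype Z] (P Q : Z → ℝ) : Prop := ∀ z, Q z = 0 → P z = 0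

/-!
Write `t = W_α(z|x) / W₀(z|x) = 1 + α (W₁(z|x) / W₀(z|x) - 1)`. Both sides are then `W₀`-averages:
`D(W_α‖W₀) = Σ W₀ φ(t)` with `φ(t) = t log t + 1 - t` (`klFun`), and
`α² χ₂(W₁‖W₀) = χ₂(W_α‖W₀) = Σ W₀ (t - 1)²`. Since `φ'' = 1/t`, comparing derivatives gives
`φ(t) ≥ (1 - s)(t - 1)²/2` whenever `|t - 1| ≤ s`. The likelihood ratios `W₁/W₀` take finitely
many values, so `|t - 1| ≤ α C` with `C` independent of `P`, and `α C ≤ √α` once `α ≤ (1 + C)⁻²`.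
-/

open Set InformationTheory

lemma hasDerivAt_klFun_sub_mul_sq {x : ℝ} (hx : x ≠ 0) (c : ℝ) :
    HasDerivAt (fun t => klFun t - c * (t - 1) ^ 2 / 2) (log x - c * (x - 1)) x := by
  refine ((hasDerivAt_klFun hx).sub
    ((((hasDerivAt_id x).sub_const 1).pow 2).const_mul c |>.div_const 2)).congr_deriv ?_
  simp only [id, Nat.cast_ofNat]; ring

lemma one_sub_mul_sq_div_two_le_klFun {s t : ℝ} (ht : 0 ≤ t) (hts : |t - 1| ≤ s) :
    (1 - s) * (t - 1) ^ 2 / 2 ≤ klFun t := by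
  set g : ℝ → ℝ := fun x => klFun x - (1 - s) * (x - 1) ^ 2 / 2
  have hg_cont : Continuous g := by fun_prop
  suffices g 1 ≤ g t by simpa [g, klFun_one] using this
  obtain ⟨hts₁, hts₂⟩ := abs_le.mp hts
  rcases le_total 1 t with h1t | ht1
  · refine monotoneOn_of_hasDerivWithinAt_nonneg (convex_Icc 1 t) hg_cont.continuousOn
      (fun x hx => (hasDerivAt_klFun_sub_mul_sq ?_ _).hasDerivWithinAt) (fun x hx => ?_)
      (left_mem_Icc.2 h1t) (right_mem_Icc.2 h1t) h1t
    · rw [interior_Icc] at hx; linarith [hx.1]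
    rw [interior_Icc] at hx
    obtain ⟨hx1, hxt⟩ := hx
    have hx0 : 0 < x := by linarith
    -- `(1 - s) x ≤ (2 - x) x ≤ 1` because `x - 1 < s`
    have : (1 - s) * (x - 1) ≤ 1 - x⁻¹ := by
      rw [show 1 - x⁻¹ = (x - 1) / x by field_simp, le_div_iff₀ hx0]
      nlinarith [mul_nonneg (mul_nonneg (by linarith : 0 ≤ s - (x - 1)) hx0.le)
        (by linarith : 0 ≤ x - 1), pow_nonneg (by linarith : 0 ≤ x - 1) 3]
    linarith [one_sub_inv_le_log_of_pos hx0]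
  · refine antitoneOn_of_hasDerivWithinAt_nonpos (convex_Icc t 1) hg_cont.continuousOn
      (fun x hx => (hasDerivAt_klFun_sub_mul_sq ?_ _).hasDerivWithinAt) (fun x hx => ?_)
      (left_mem_Icc.2 ht1) (right_mem_Icc.2 ht1) ht1
    · rw [interior_Icc] at hx; linarith [hx.1]
    rw [interior_Icc] at hx
    obtain ⟨htx, hx1⟩ := hx
    nlinarith [log_le_sub_one_of_pos (ht.trans_lt htx)]

section FiniteAlphabet

variable {Z : Type*} [Fintype Z] {P Q : Z → ℝ}

lemma KL_eq_sum_mul_klFun (hPQ : AC P Q) (hsum : ∑ z, P z = ∑ z, Q z) :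
    KL P Q = ∑ z, Q z * klFun (P z / Q z) := by
  have hterm : ∀ z, Q z * klFun (P z / Q z) = P z * log (P z / Q z) + (Q z - P z) := by
    intro z
    by_cases hQ : Q z = 0
    · simp [hQ, hPQ z hQ]
    · rw [klFun_apply]; field_simp; ring
  simp only [hterm, Finset.sum_add_distrib, Finset.sum_sub_distrib, hsum, sub_self, add_zero]
  rfl

lemma chi2_eq_sum_mul_sq (P Q : Z → ℝ) : chi2 P Q = ∑ z, Q z * (P z / Q z - 1) ^ 2 := by
  refine Finset.sum_congr rfl fun z _ => ?_
  by_cases hQ : Q z = 0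
  · simp [hQ]
  · field_simp

lemma chi2_mixture (α : ℝ) (P Q : Z → ℝ) :
    chi2 (fun z => α * P z + (1 - α) * Q z) Q = α ^ 2 * chi2 P Q := by
  rw [chi2, chi2, Finset.mul_sum]
  exact Finset.sum_congr rfl fun z _ => by ring

lemma one_sub_div_two_mul_chi2_le_KL {s : ℝ} (hP : ∀ z, 0 ≤ P z) (hQ : ∀ z, 0 ≤ Q z)
    (hPQ : AC P Q) (hsum : ∑ z, P z = ∑ z, Q z) (hratio : ∀ z, Q z ≠ 0 → |P z / Q z - 1| ≤ s) :
    (1 - s) / 2 * chi2 P Q ≤ KL P Q := by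
  rw [KL_eq_sum_mul_klFun hPQ hsum, chi2_eq_sum_mul_sq, Finset.mul_sum]
  refine Finset.sum_le_sum fun z _ => ?_
  by_cases hQz : Q z = 0
  · simp [hQz]
  calc (1 - s) / 2 * (Q z * (P z / Q z - 1) ^ 2)
      = Q z * ((1 - s) * (P z / Q z - 1) ^ 2 / 2) := by ring
    _ ≤ Q z * klFun (P z / Q z) :=
      mul_le_mul_of_nonneg_left
        (one_sub_mul_sq_div_two_le_klFun (div_nonneg (hP z) (hQ z)) (hratio z hQz)) (hQ z)

lemma one_sub_mul_chi2_le_KL_mixture {s α : ℝ} (hP : ∀ z, 0 ≤ P z) (hQ : ∀ z, 0 ≤ Q z)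
    (hPQ : AC P Q) (hsum : ∑ z, P z = ∑ z, Q z) (hα₀ : 0 ≤ α) (hα₁ : α ≤ 1)
    (hratio : ∀ z, Q z ≠ 0 → α * |P z / Q z - 1| ≤ s) :
    (1 - s) * (α ^ 2 / 2) * chi2 P Q ≤ KL (fun z => α * P z + (1 - α) * Q z) Q := by
  have hmix := one_sub_div_two_mul_chi2_le_KL (P := fun z => α * P z + (1 - α) * Q z) (s := s)
    (fun z => add_nonneg (mul_nonneg hα₀ (hP z)) (mul_nonneg (sub_nonneg.2 hα₁) (hQ z)))
    hQ (fun z hz => by simp [hz, hPQ z hz])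
    (by simp only [Finset.sum_add_distrib, ← Finset.mul_sum, hsum]; ring)
    (fun z hz => by
      rw [show (α * P z + (1 - α) * Q z) / Q z - 1 = α * (P z / Q z - 1) by field_simp; ring,
        abs_mul, abs_of_nonneg hα₀]
      exact hratio z hz)
  rw [chi2_mixture] at hmix
  linarith

end FiniteAlphabet

lemma mul_le_sqrt_of_le_inv_one_add_sq {α C : ℝ} (hα : 0 ≤ α) (hC : 0 ≤ C)
    (h : α ≤ (1 + C)⁻¹ ^ 2) : α * C ≤ √α := by
  have hsqrt : √α * (1 + C) ≤ 1 := by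
    have := Real.sqrt_le_sqrt h
    rw [Real.sqrt_sq (by positivity)] at this
    rwa [← le_mul_inv_iff₀ (by positivity), one_mul]
  nlinarith [Real.mul_self_sqrt hα, Real.sqrt_nonneg α]

/-- averaged form of the quadratic lower bound on the
mixture divergence, with a threshold on `α` uniform in the mixing pmf `P`. -/
theorem stmt15 {X2 Z : Type*} [Fintype X2] [Fintype Z]
    (W0 W1 : X2 → Z → ℝ)
    (hW0 : ∀ x, IsPMF (W0 x)) (hW1 : ∀ x, IsPMF (W1 x))
    (hAC : ∀ x, AC (W1 x) (W0 x)) :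
    ∃ α₀ > (0:ℝ), ∀ α : ℝ, 0 < α → α ≤ α₀ → α ≤ 1 →
      ∀ P : X2 → ℝ, IsPMF P →
        (1 - Real.sqrt α) * (α ^ 2 / 2) * ∑ x, P x * chi2 (W1 x) (W0 x)
          ≤ ∑ x, P x * KL (fun z => α * W1 x z + (1 - α) * W0 x z) (W0 x) := by
  set C := ∑ p : X2 × Z, |W1 p.1 p.2 / W0 p.1 p.2 - 1|
  have hC : ∀ x z, |W1 x z / W0 x z - 1| ≤ C := fun x z =>
    Finset.single_le_sum (f := fun p : X2 × Z => |W1 p.1 p.2 / W0 p.1 p.2 - 1|)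
      (fun _ _ => abs_nonneg _) (Finset.mem_univ (x, z))
  refine ⟨(1 + C)⁻¹ ^ 2, by positivity, fun α hα hαα₀ hα₁ P hP => ?_⟩
  have hαC := mul_le_sqrt_of_le_inv_one_add_sq hα.le (by positivity) hαα₀
  have hx : ∀ x, (1 - √α) * (α ^ 2 / 2) * chi2 (W1 x) (W0 x)
      ≤ KL (fun z => α * W1 x z + (1 - α) * W0 x z) (W0 x) := fun x =>
    one_sub_mul_chi2_le_KL_mixture (hW1 x).1 (hW0 x).1 (hAC x) ((hW1 x).2.trans (hW0 x).2.symm)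
      hα.le hα₁ fun z _ => (mul_le_mul_of_nonneg_left (hC x z) hα.le).trans hαC
  rw [Finset.mul_sum]
  exact Finset.sum_le_sum fun x _ => by
    rw [mul_left_comm]; exact mul_le_mul_of_nonneg_left (hx x) (hP.1 x)
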